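/- arXiv:1205.6294 — 6 statements merged into one kernel-verified Lean document; each statement's English description precedes it below -/
import Mathlib

section
/- The type-B Bernoulli-like polynomial B^B_{r,s}(x) has degree r+2s if r is odd, and degree r+2s-1 if r is even. -/
open Polynomial

/-- The forward difference lowers natDegree by exactly one (over ℝ). -/
lemma diff_natDegree (B : ℝ[X]) (h : B.comp (X + 1) - B ≠ 0) :
    (B.comp (X + 1) - B).natDegree + 1 = B.natDegree := by
  have hB0 : B ≠ 0 := by rintro rfl; simp at h
  set n := B.natDegree with hn
  have hT : B.comp (X + 1) = taylor 1 B := by rw [taylor_apply, C_1]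
  have hn1 : 1 ≤ n := by
    by_contra hc
    push_neg at hc
    have : n = 0 := by omega
    have hBC : B = C (B.coeff 0) := eq_C_of_natDegree_le_zero (by omega)
    apply h
    rw [hBC]; simp
  have hTne : taylor (1:ℝ) B ≠ 0 := fun hz => hB0 (taylor_injective 1 (by simp [hz]))
  have hTdeg : (taylor (1:ℝ) B).natDegree = n := natDegree_taylor B 1
  -- hasseDeriv n B = C (B.coeff n)
  have hHn : hasseDeriv n B = C (B.coeff n) := by
    have h1 : (hasseDeriv n B).natDegree ≤ 0 := le_trans (natDegree_hasseDeriv_le B n) (by omega)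
    have h2 := eq_C_of_natDegree_le_zero h1
    rw [h2, hasseDeriv_coeff]
    simp
  have hlead : (taylor (1:ℝ) B).coeff n = B.coeff n := by
    rw [taylor_coeff, hHn]; simp
  have hdeg : (B.comp (X + 1) - B).degree < (n : ℕ) := by
    rw [hT]
    have := degree_sub_lt (p := taylor (1:ℝ) B) (q := B) ?_ hTne ?_
    · rwa [degree_eq_natDegree hTne, hTdeg] at this
    · rw [degree_eq_natDegree hTne, degree_eq_natDegree hB0, hTdeg]
    · rw [leadingCoeff, leadingCoeff, hTdeg, hlead]
  -- coefficient at n-1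
  have hcoeff : (B.comp (X + 1) - B).coeff (n - 1) = n * B.coeff n := by
    rw [hT, coeff_sub, taylor_coeff]
    have hd1 : (hasseDeriv (n-1) B).natDegree < 2 :=
      lt_of_le_of_lt (natDegree_hasseDeriv_le B (n-1)) (by omega)
    rw [eval_eq_sum_range' hd1]
    rw [Finset.sum_range_succ, Finset.sum_range_one]
    rw [hasseDeriv_coeff, hasseDeriv_coeff]
    have e0 : 0 + (n - 1) = n - 1 := by omega
    have e1 : 1 + (n - 1) = n := by omega
    rw [e0, e1]
    have : n.choose (n - 1) = n := by
      rw [Nat.choose_symm hn1, Nat.choose_one_right]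
    rw [this]
    simp [Nat.choose_self]
  have hcne : (B.comp (X + 1) - B).coeff (n - 1) ≠ 0 := by
    rw [hcoeff]
    have : B.coeff n ≠ 0 := by
      rw [hn]; exact leadingCoeff_ne_zero.mpr hB0
    exact mul_ne_zero (Nat.cast_ne_zero.mpr (by omega)) this
  have h1 : n - 1 ≤ (B.comp (X + 1) - B).natDegree := le_natDegree_of_ne_zero hcne
  have h2 : (B.comp (X + 1) - B).natDegree < n :=
    (natDegree_lt_iff_degree_lt h).mpr (by exact_mod_cast hdeg)
  omega

/-- The type-B Bernoulli-like polynomial B^B_{r,s} has degree r+2s if r is odd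
and r+2s-1 if r is even. -/
theorem stmt3 (r s : ℕ) (hr : 0 < r) (Q B : ℝ[X])
    (hQ : (2 * X + 1) * Q = (X + 1) ^ r - (-X) ^ r)
    (hB : B.comp (X + 1) - B = Q * (X + 1) ^ s * (-X) ^ s)
    (hB0 : B.eval 0 = 0) :
    (Odd r → B.natDegree = r + 2 * s) ∧ (Even r → B.natDegree = r + 2 * s - 1) := by
  -- RHS of hQ is nonzero
  have hRne : ((X + 1) ^ r - (-X) ^ r : ℝ[X]) ≠ 0 := by
    intro hz
    have := congrArg (Polynomial.eval (1:ℝ)) hz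
    simp at this
    norm_num at this
    have h2 : (1:ℝ) < 2 ^ r := one_lt_pow₀ (by norm_num) (by omega)
    rcases Nat.even_or_odd r with he | ho
    · rw [he.neg_one_pow] at this; nlinarith
    · rw [ho.neg_one_pow] at this
      have : (0:ℝ) < 2 ^ r := by positivity
      nlinarith
  have hQne : Q ≠ 0 := by
    rintro rfl
    rw [mul_zero] at hQ
    exact hRne hQ.symm
  have h21ne : (2 * X + 1 : ℝ[X]) ≠ 0 := by
    intro h
    have := congrArg (Polynomial.eval (1:ℝ)) h
    norm_num at this
  have h21 : (2 * X + 1 : ℝ[X]).natDegree = 1 := by compute_degree!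
  have hmul : ((2 * X + 1) * Q).natDegree = 1 + Q.natDegree := by
    rw [natDegree_mul h21ne hQne, h21]
  have hX1ne : ((X : ℝ[X]) + 1) ≠ 0 := by
    intro h
    have := congrArg (Polynomial.eval (0:ℝ)) h
    norm_num at this
  have hnXne : (-X : ℝ[X]) ≠ 0 := by simpa using X_ne_zero (R := ℝ)
  have hX1d : ((X : ℝ[X]) + 1).natDegree = 1 := by compute_degree!
  have hPne : Q * (X + 1) ^ s * (-X) ^ s ≠ 0 :=
    mul_ne_zero (mul_ne_zero hQne (pow_ne_zero _ hX1ne)) (pow_ne_zero _ hnXne)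
  have hPdeg : (Q * (X + 1) ^ s * (-X) ^ s).natDegree = Q.natDegree + 2 * s := by
    rw [natDegree_mul (mul_ne_zero hQne (pow_ne_zero _ hX1ne)) (pow_ne_zero _ hnXne),
      natDegree_mul hQne (pow_ne_zero _ hX1ne), natDegree_pow, natDegree_pow, hX1d,
      natDegree_neg, natDegree_X]
    ring
  have hdne : B.comp (X + 1) - B ≠ 0 := by rw [hB]; exact hPne
  have hBdeg : Q.natDegree + 2 * s + 1 = B.natDegree := by
    rw [← hPdeg, ← hB]
    exact diff_natDegree B hdne
  constructor
  · intro ho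
    have hRd : ((X + 1) ^ r - (-X) ^ r : ℝ[X]).natDegree = r := by
      rw [ho.neg_pow, sub_neg_eq_add]
      apply le_antisymm
      · exact (natDegree_add_le _ _).trans (by simp [natDegree_pow, hX1d])
      · apply le_natDegree_of_ne_zero
        rw [coeff_add, coeff_X_add_one_pow, coeff_X_pow]
        simp
    rw [hQ, hRd] at hmul
    omega
  · intro he
    have hr2 : 2 ≤ r := by
      rcases he with ⟨k, hk⟩; omega
    have hRd : ((X + 1) ^ r - (-X) ^ r : ℝ[X]).natDegree = r - 1 := by
      rw [he.neg_pow]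
      have hc : ((X + 1 : ℝ[X]) ^ r - X ^ r).coeff (r - 1) = (r : ℝ) := by
        rw [coeff_sub, coeff_X_add_one_pow, coeff_X_pow]
        have : ¬ (r - 1 = r) := by omega
        rw [if_neg this, Nat.choose_symm (show 1 ≤ r by omega), Nat.choose_one_right]
        simp
      have hne : ((X + 1 : ℝ[X]) ^ r - X ^ r) ≠ 0 := by
        intro h
        rw [h] at hc
        simp at hc
        exact_mod_cast absurd hc.symm (by positivity)
      apply le_antisymm
      · have hmon : ((X : ℝ[X]) + 1).Monic := by
          have : ((X : ℝ[X]) + 1) = X + C 1 := by rw [C_1]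
          rw [this]; exact monic_X_add_C 1
        have hd : ((X + 1 : ℝ[X]) ^ r - X ^ r).degree < (r : WithBot ℕ) := by
          have := degree_sub_lt (p := (X + 1 : ℝ[X]) ^ r) (q := X ^ r) ?_
            (pow_ne_zero _ hX1ne) ?_
          · rwa [degree_eq_natDegree (pow_ne_zero r hX1ne), natDegree_pow, hX1d, mul_one]
              at this
          · rw [degree_eq_natDegree (pow_ne_zero r hX1ne),
              degree_eq_natDegree (pow_ne_zero r (X_ne_zero (R := ℝ))),
              natDegree_pow, natDegree_pow, hX1d, natDegree_X]
          · rw [(hmon.pow r).leadingCoeff, (monic_X_pow r (R := ℝ)).leadingCoeff]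
        have := (natDegree_lt_iff_degree_lt hne).mpr hd
        omega
      · apply le_natDegree_of_ne_zero
        rw [hc]
        exact_mod_cast Nat.cast_ne_zero.mpr (by omega)
    rw [hQ, hRd] at hmul
    omega
end

section
/- The type-B Bernoulli-like polynomial B^B_{r,s}(x) is an odd function: B^B_{r,s}(-x) = -B^B_{r,s}(x) as polynomials. -/
open Polynomial

/-- A real polynomial with period 1 vanishing at 0 is zero. -/
lemma periodic_zero (P : ℝ[X]) (h : P.comp (X + 1) = P) (h0 : P.eval 0 = 0) :
    P = 0 := by
  have key : ∀ n : ℕ, P.eval (n : ℝ) = 0 := by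
    intro n
    induction n with
    | zero => simpa using h0
    | succ n ih =>
      have : P.eval ((n : ℝ) + 1) = P.eval (n : ℝ) := by
        conv_rhs => rw [← h]
        simp [eval_comp]
      push_cast
      rw [this, ih]
  apply eq_zero_of_infinite_isRoot
  apply Set.infinite_of_injective_forall_mem (f := fun n : ℕ => (n : ℝ))
    (hi := fun a b hab => Nat.cast_injective hab)
  intro n
  exact key n

/-- The type-B Bernoulli-like polynomial is an odd function. -/
theorem stmt4 (r s : ℕ) (hr : 0 < r) (Q B : ℝ[X])
    (hQ : (2 * X + 1) * Q = (X + 1) ^ r - (-X) ^ r)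
    (hB : B.comp (X + 1) - B = Q * (X + 1) ^ s * (-X) ^ s)
    (hB0 : B.eval 0 = 0) :
    B.comp (-X) = -B := by
  have h2X : (2 * X + 1 : ℝ[X]) ≠ 0 := by
    intro h
    have := congrArg (eval 0) h
    simp at this
  -- Q is symmetric: Q.comp (-(X+1)) = Q
  have hQsym : Q.comp (-(X + 1)) = Q := by
    have h1 := congrArg (fun p => p.comp (-(X + 1))) hQ
    simp only [mul_comp, add_comp, sub_comp, pow_comp, X_comp, one_comp, neg_comp,
      ofNat_comp] at h1
    push_cast at h1
    have e2 : (-(X + 1) + 1 : ℝ[X]) = -X := by ring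
    have e3 : (- -(X + 1) : ℝ[X]) = X + 1 := by ring
    rw [e2, e3] at h1
    have h1' : (2 * X + 1) * Q.comp (-(X + 1)) = (X + 1) ^ r - (-X) ^ r := by
      linear_combination -h1
    exact mul_left_cancel₀ h2X (h1'.trans hQ.symm)
  have hcomp : B.comp (-X) - B.comp (-(X + 1)) = Q * (X + 1) ^ s * (-X) ^ s := by
    have h1 := congrArg (fun p => p.comp (-(X + 1))) hB
    simp only [sub_comp, mul_comp, pow_comp, add_comp, X_comp, one_comp, neg_comp,
      comp_assoc] at h1
    have e2 : (-(X + 1) + 1 : ℝ[X]) = -X := by ring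
    have e3 : (- -(X + 1) : ℝ[X]) = X + 1 := by ring
    rw [e2, e3, hQsym] at h1
    rw [h1]; ring
  set E : ℝ[X] := B + B.comp (-X) with hE
  have hEper : E.comp (X + 1) = E := by
    have hc : (B.comp (-X)).comp (X + 1) = B.comp (-(X + 1)) := by
      rw [comp_assoc]
      congr 1
      simp [neg_comp]
    have : E.comp (X + 1) = B.comp (X + 1) + B.comp (-(X + 1)) := by
      rw [hE, add_comp, hc]
    rw [this, hE]
    linear_combination hB - hcomp
  have hE0 : E.eval 0 = 0 := by
    simp [hE, eval_comp, hB0]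
  have hEzero : E = 0 := periodic_zero E hEper hE0
  rw [hE] at hEzero
  linear_combination hEzero
end

section
/- The type-C Bernoulli-like polynomial B^C_{r,s}(x) has degree r+2s if r is odd, and degree r+2s-1 if r is even. -/
open Polynomial Finset

private lemma coeff_comp_X_add_one (B : ℝ[X]) (k : ℕ) :
    (B.comp (X + 1)).coeff k
      = ∑ i ∈ range (B.natDegree + 1), B.coeff i * (i.choose k : ℝ) := by
  have h := Polynomial.sum_over_range (p := B)
    (f := fun e a => C a * ((X : ℝ[X]) + 1) ^ e) (by simp)
  rw [comp_eq_sum_left, h]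
  simp [finset_sum_coeff, coeff_X_add_one_pow]

private lemma natDegree_fwdDiff (B : ℝ[X]) (m : ℕ) (hm : B.natDegree = m + 1) :
    (B.comp (X + 1) - B).natDegree = m := by
  have hB0 : B ≠ 0 := fun h => by simp [h] at hm
  have hb : B.coeff (m + 1) ≠ 0 := by
    rw [← hm]; exact Polynomial.coeff_ne_zero_of_eq_degree (degree_eq_natDegree hB0)
  apply le_antisymm
  · rw [Polynomial.natDegree_le_iff_coeff_eq_zero]
    intro k hk
    rw [coeff_sub, coeff_comp_X_add_one, hm]
    rcases eq_or_lt_of_le (Nat.succ_le_of_lt hk) with hk1 | hk1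
    · -- k = m + 1
      rw [← hk1]
      rw [Finset.sum_eq_single (m + 1)]
      · simp
      · intro i hi hne
        have : i < m + 1 := by
          have h2 := Finset.mem_range.mp hi; omega
        rw [Nat.choose_eq_zero_of_lt this, Nat.cast_zero, mul_zero]
      · intro h; exact absurd (Finset.self_mem_range_succ (m + 1)) h
    · -- k > m + 1
      have h1 : ∀ i ∈ range (m + 1 + 1), B.coeff i * (i.choose k : ℝ) = 0 := by
        intro i hi
        have : i < k := by have := Finset.mem_range.mp hi; omega
        rw [Nat.choose_eq_zero_of_lt this, Nat.cast_zero, mul_zero]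
      rw [Finset.sum_eq_zero h1, coeff_eq_zero_of_natDegree_lt (by omega)]
      ring
  · apply Polynomial.le_natDegree_of_ne_zero
    rw [coeff_sub, coeff_comp_X_add_one, hm]
    rw [Finset.sum_range_succ, Finset.sum_range_succ]
    have h0 : ∀ i ∈ range m, B.coeff i * (i.choose m : ℝ) = 0 := by
      intro i hi
      rw [Nat.choose_eq_zero_of_lt (Finset.mem_range.mp hi), Nat.cast_zero, mul_zero]
    rw [Finset.sum_eq_zero h0, Nat.choose_self, Nat.choose_succ_self_right]
    push_cast
    have : (0:ℝ) + B.coeff m * 1 + B.coeff (m+1) * (m+1) - B.coeff m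
        = (m+1) * B.coeff (m+1) := by ring
    rw [this]
    exact mul_ne_zero (by positivity) hb

private lemma deg_from_diff (B P : ℝ[X]) (d : ℕ) (hB : B.comp (X + 1) - B = P)
    (hd : P.natDegree = d) (hP : P ≠ 0) : B.natDegree = d + 1 := by
  have hn : B.natDegree ≠ 0 := by
    intro h
    obtain ⟨a, rfl⟩ := Polynomial.natDegree_eq_zero.mp h
    simp at hB
    exact hP hB.symm
  obtain ⟨m, hm⟩ : ∃ m, B.natDegree = m + 1 := ⟨B.natDegree - 1, by omega⟩
  have := natDegree_fwdDiff B m hm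
  rw [hB, hd] at this
  omega

/-- The type-C Bernoulli-like polynomial B^C_{r,s} has degree r+2s if r is odd
and r+2s-1 if r is even. -/
theorem stmt8 (r s : ℕ) (hr : 0 < r) (B : ℝ[X])
    (hB : B.comp (X + 1) - B = ((X + 1) ^ (r - 1) + (-X) ^ (r - 1)) * (X + 1) ^ s * (-X) ^ s)
    (hB0 : B.eval 0 = 0) :
    (Odd r → B.natDegree = r + 2 * s) ∧ (Even r → B.natDegree = r + 2 * s - 1) := by
  have hX1 : ((X : ℝ[X]) + 1).natDegree = 1 := by simpa using natDegree_X_add_C (1:ℝ)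
  have hX1s : (((X : ℝ[X]) + 1) ^ s).natDegree = s := by
    rw [natDegree_pow, hX1, mul_one]
  have hX1ne : (((X : ℝ[X]) + 1) ^ s) ≠ 0 :=
    pow_ne_zero _ (fun h => by simp [h] at hX1)
  have hnXs : ((-X : ℝ[X]) ^ s).natDegree = s := by
    rw [natDegree_pow, natDegree_neg, natDegree_X, mul_one]
  have hnXne : ((-X : ℝ[X]) ^ s) ≠ 0 := pow_ne_zero _ (neg_ne_zero.mpr X_ne_zero)
  constructor
  · intro hodd
    have heven : Even (r - 1) := Nat.Odd.sub_odd hodd odd_one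
    set Q : ℝ[X] := (X + 1) ^ (r - 1) + (-X) ^ (r - 1) with hQ
    have hQeq : Q = (X + 1) ^ (r - 1) + X ^ (r - 1) := by
      rw [hQ, heven.neg_pow]
    have hQc : Q.coeff (r - 1) = 2 := by
      rw [hQeq, coeff_add, coeff_X_add_one_pow, coeff_X_pow]
      norm_num
    have hQne : Q ≠ 0 := fun h => by simp [h] at hQc
    have hQd : Q.natDegree = r - 1 := by
      apply le_antisymm
      · apply le_trans (hQeq ▸ natDegree_add_le _ _)
        simp [natDegree_pow, hX1]
      · exact le_natDegree_of_ne_zero (by rw [hQc]; norm_num)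
    have hPd : (Q * (X + 1) ^ s * (-X) ^ s).natDegree = (r - 1) + s + s := by
      rw [natDegree_mul (mul_ne_zero hQne hX1ne) hnXne,
        natDegree_mul hQne hX1ne, hQd, hX1s, hnXs]
    have := deg_from_diff B _ _ hB hPd
      (mul_ne_zero (mul_ne_zero hQne hX1ne) hnXne)
    omega
  · intro heven
    have hr2 : 2 ≤ r := by
      rcases heven with ⟨t, ht⟩; omega
    have hodd1 : Odd (r - 1) := Nat.Even.sub_odd (by omega) heven odd_one
    set Q : ℝ[X] := (X + 1) ^ (r - 1) + (-X) ^ (r - 1) with hQ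
    have hQeq : Q = (X + 1) ^ (r - 1) - X ^ (r - 1) := by
      rw [hQ, hodd1.neg_pow]; ring
    have hQc : Q.coeff (r - 2) = (r - 1 : ℕ) := by
      have h12 : r - 1 = (r - 2) + 1 := by omega
      rw [hQeq, coeff_sub, coeff_X_add_one_pow, coeff_X_pow,
        if_neg (by omega : ¬ (r - 2 = r - 1)), sub_zero, h12, Nat.choose_succ_self_right]
    have hQne : Q ≠ 0 := fun h => by
      rw [h, coeff_zero] at hQc
      have : (r - 1 : ℕ) ≠ 0 := by omega
      exact this (by exact_mod_cast hQc.symm)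
    have hQd : Q.natDegree = r - 2 := by
      apply le_antisymm
      · rw [Polynomial.natDegree_le_iff_coeff_eq_zero]
        intro k hk
        rw [hQeq, coeff_sub, coeff_X_add_one_pow, coeff_X_pow]
        rcases eq_or_lt_of_le (show r - 1 ≤ k by omega) with h | h
        · rw [← h, Nat.choose_self, if_pos rfl]; norm_num
        · rw [Nat.choose_eq_zero_of_lt h, if_neg (by omega)]; norm_num
      · apply le_natDegree_of_ne_zero
        rw [hQc]
        exact_mod_cast (by omega : (r - 1 : ℕ) ≠ 0)
    have hPd : (Q * (X + 1) ^ s * (-X) ^ s).natDegree = (r - 2) + s + s := by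
      rw [natDegree_mul (mul_ne_zero hQne hX1ne) hnXne,
        natDegree_mul hQne hX1ne, hQd, hX1s, hnXs]
    have := deg_from_diff B _ _ hB hPd
      (mul_ne_zero (mul_ne_zero hQne hX1ne) hnXne)
    omega
end

section
/- Let B̄^B_{r,s}(x,z) = z^{r+2s} B^B_{r,s}(x/z) be the homogenization of the type-B Bernoulli-like polynomial. Then for any ε ∈ {-1, 0, 1} and variables x_p, x_q, the two-variable polynomial B̄^B_{r,s}(x_p, z) + ε B̄^B_{r,s}(x_q, z) lies in the ideal generated by x_p + ε x_q in R[x_p, x_q, z]. -/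
open Polynomial

private lemma comp_neg_coeff (p : ℝ[X]) (n : ℕ) :
    (p.comp (-X)).coeff n = (-1) ^ n * p.coeff n := by
  induction p using Polynomial.induction_on' with
  | add p q hp hq => simp [add_comp, hp, hq]; ring
  | monomial k a =>
      simp only [monomial_comp, coeff_monomial]
      have hk : ((-X : ℝ[X])) ^ k = C ((-1 : ℝ) ^ k) * X ^ k := by
        rw [neg_pow, map_pow, map_neg, map_one]
      rw [hk, ← mul_assoc, ← C_mul, coeff_C_mul, coeff_X_pow]
      rcases eq_or_ne k n with h | h
      · subst h; simp [mul_comm]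
      · simp [h, Ne.symm h]

private lemma const_of_comp (P : ℝ[X]) (h : P.comp (X + 1) = P) : P = C (P.eval 0) := by
  have key : ∀ n : ℕ, P.eval (n : ℝ) = P.eval 0 := by
    intro n
    induction n with
    | zero => simp
    | succ n ih =>
        have := congrArg (fun p => p.eval (n : ℝ)) h
        simp [eval_comp] at this
        rw [← ih, ← this]; push_cast; ring_nf
  have : P - C (P.eval 0) = 0 := by
    apply eq_zero_of_infinite_isRoot
    apply Set.infinite_of_injective_forall_mem (f := fun n : ℕ => (n : ℝ)) Nat.cast_injective
    intro n
    simp [IsRoot, key n]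
  linear_combination this

/-- With B̄^B_{r,s}(x,z) = z^{r+2s} B^B_{r,s}(x/z) the homogenization of the
type-B Bernoulli-like polynomial (written as Σᵢ (coeff i of B) xⁱ z^{r+2s-i}),
for ε ∈ {-1,0,1}, B̄^B_{r,s}(x_p,z) + ε B̄^B_{r,s}(x_q,z) lies in the ideal
(x_p + ε x_q) of ℝ[x_p, x_q, z].  Variables: X 0 = x_p, X 1 = x_q, X 2 = z. -/
theorem stmt9 (r s : ℕ) (hr : 0 < r) (Q B : ℝ[X])
    (hQ : (2 * X + 1) * Q = (X + 1) ^ r - (-X) ^ r)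
    (hB : B.comp (X + 1) - B = Q * (X + 1) ^ s * (-X) ^ s)
    (hB0 : B.eval 0 = 0)
    (ε : ℝ) (hε : ε = -1 ∨ ε = 0 ∨ ε = 1) :
    (∑ i ∈ Finset.range (r + 2 * s + 1),
        MvPolynomial.C (B.coeff i) * MvPolynomial.X 0 ^ i
          * MvPolynomial.X 2 ^ (r + 2 * s - i))
      + MvPolynomial.C ε * (∑ i ∈ Finset.range (r + 2 * s + 1),
        MvPolynomial.C (B.coeff i) * MvPolynomial.X 1 ^ i
          * MvPolynomial.X 2 ^ (r + 2 * s - i))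
      ∈ Ideal.span {(MvPolynomial.X 0 + MvPolynomial.C ε * MvPolynomial.X 1 :
          MvPolynomial (Fin 3) ℝ)} := by
  rw [Ideal.mem_span_singleton]
  have h20 : (2 * X + 1 : ℝ[X]) ≠ 0 := by
    intro h
    have := congrArg (fun p => p.eval 0) h
    simp at this
  have hQsym : Q.comp (-X - 1) = Q := by
    apply mul_left_cancel₀ h20
    have := congrArg (fun p => p.comp (-X - 1)) hQ
    simp only [mul_comp, add_comp, sub_comp, pow_comp, X_comp, one_comp, neg_comp,
      ofNat_comp] at this
    rw [hQ]
    linear_combination -this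
  have hBodd : B.comp (-X) = -B := by
    have hB' : B.comp (-X) - B.comp (-X - 1) = Q * (-X) ^ s * (X + 1) ^ s := by
      have := congrArg (fun p => p.comp (-X - 1)) hB
      simp only [sub_comp, mul_comp, pow_comp, add_comp, X_comp, one_comp, neg_comp,
        comp_assoc] at this
      rw [hQsym] at this
      rw [show (-X - 1 + 1 : ℝ[X]) = -X by ring] at this
      rw [show (-(-X - 1) : ℝ[X]) = X + 1 by ring] at this
      exact this
    set D := B + B.comp (-X) with hDdef
    have hD : D.comp (X + 1) = D := by
      have e1 : (B.comp (-X)).comp (X + 1) = B.comp (-X - 1) := by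
        rw [comp_assoc]; congr 1; simp [neg_comp]; ring
      rw [hDdef, add_comp, e1]
      linear_combination hB - hB'
    have hD0 : D = 0 := by
      rw [const_of_comp D hD]
      have : D.eval 0 = 0 := by simp [hDdef, eval_comp, hB0]
      rw [this, map_zero]
    have : B.comp (-X) = D - B := by rw [hDdef]; ring
    rw [this, hD0]; ring
  have hcoeff : ∀ i : ℕ, Even i → B.coeff i = 0 := by
    intro i hi
    have := congrArg (fun p => p.coeff i) hBodd
    simp only [comp_neg_coeff, coeff_neg, hi.neg_one_pow, one_mul] at this
    linarith
  rcases hε with h | h | h <;> subst h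
  · -- ε = -1
    have hgen : (MvPolynomial.X 0 + MvPolynomial.C (-1 : ℝ) * MvPolynomial.X 1 :
        MvPolynomial (Fin 3) ℝ) = MvPolynomial.X 0 - MvPolynomial.X 1 := by
      rw [map_neg, map_one]; ring
    have hsum : (∑ i ∈ Finset.range (r + 2 * s + 1),
        MvPolynomial.C (B.coeff i) * MvPolynomial.X 0 ^ i
          * MvPolynomial.X 2 ^ (r + 2 * s - i))
      + MvPolynomial.C (-1 : ℝ) * (∑ i ∈ Finset.range (r + 2 * s + 1),
        MvPolynomial.C (B.coeff i) * MvPolynomial.X 1 ^ i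
          * MvPolynomial.X 2 ^ (r + 2 * s - i))
      = ∑ i ∈ Finset.range (r + 2 * s + 1),
          MvPolynomial.C (B.coeff i) * ((MvPolynomial.X 0 : MvPolynomial (Fin 3) ℝ) ^ i
            - MvPolynomial.X 1 ^ i) * MvPolynomial.X 2 ^ (r + 2 * s - i) := by
      rw [Finset.mul_sum, ← Finset.sum_add_distrib]
      refine Finset.sum_congr rfl fun i _ => ?_
      rw [map_neg, map_one]; ring
    rw [hsum, hgen]
    apply Finset.dvd_sum
    intro i _
    exact Dvd.dvd.mul_right
      (Dvd.dvd.mul_left (sub_dvd_pow_sub_pow _ _ i) _) _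
  · -- ε = 0
    simp only [map_zero, zero_mul, add_zero]
    apply Finset.dvd_sum
    intro i _
    rcases Nat.eq_zero_or_pos i with h0 | h0
    · subst h0
      rw [show B.coeff 0 = 0 by rw [coeff_zero_eq_eval_zero]; exact hB0]
      simp
    · exact Dvd.dvd.mul_right (Dvd.dvd.mul_left (dvd_pow_self _ h0.ne') _) _
  · -- ε = 1
    have hsum : (∑ i ∈ Finset.range (r + 2 * s + 1),
        MvPolynomial.C (B.coeff i) * MvPolynomial.X 0 ^ i
          * MvPolynomial.X 2 ^ (r + 2 * s - i))
      + MvPolynomial.C (1 : ℝ) * (∑ i ∈ Finset.range (r + 2 * s + 1),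
        MvPolynomial.C (B.coeff i) * MvPolynomial.X 1 ^ i
          * MvPolynomial.X 2 ^ (r + 2 * s - i))
      = ∑ i ∈ Finset.range (r + 2 * s + 1),
          MvPolynomial.C (B.coeff i) * ((MvPolynomial.X 0 : MvPolynomial (Fin 3) ℝ) ^ i
            + MvPolynomial.X 1 ^ i) * MvPolynomial.X 2 ^ (r + 2 * s - i) := by
      rw [Finset.mul_sum, ← Finset.sum_add_distrib]
      refine Finset.sum_congr rfl fun i _ => ?_
      rw [map_one]; ring
    rw [hsum, map_one, one_mul]
    apply Finset.dvd_sum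
    intro i _
    rcases Nat.even_or_odd i with he | ho
    · rw [hcoeff i he]; simp
    · have hd : (MvPolynomial.X 0 + MvPolynomial.X 1 : MvPolynomial (Fin 3) ℝ) ∣
          (MvPolynomial.X 0 ^ i + MvPolynomial.X 1 ^ i) := by
        have := sub_dvd_pow_sub_pow (MvPolynomial.X 0 : MvPolynomial (Fin 3) ℝ)
          (-MvPolynomial.X 1) i
        rw [ho.neg_pow, sub_neg_eq_add, sub_neg_eq_add] at this
        exact this
      exact Dvd.dvd.mul_right (Dvd.dvd.mul_left hd _) _
end

section
/- With B̄^B_{r,s}(x,z) the homogenization of the type-B Bernoulli-like polynomial, for any ε ∈ {-1, 0, 1}: B̄^B_{r,s}(x_p, z) + ε B̄^B_{r,s}(x_q, z) ≡ (x_p + ε x_q) · ((x_p^r - (ε x_q)^r)/(x_p - ε x_q)) · (x_p · ε x_q)^s modulo the ideal generated by (x_p + ε x_q - z) in R[x_p, x_q, z], where (x_p^r - (ε x_q)^r)/(x_p - ε x_q) denotes the polynomial Σ_{i=0}^{r-1} x_p^{r-1-i} (ε x_q)^i. -/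
/-!
Write `F(x, z) = z ^ (r + 2s) B(x / z)` and `G(x, z) = z ^ (r - 1) Q(x / z)` for the
homogenizations of `B` and `Q`; the sums in the statement are `F(x_p, z)` and `F(x_q, z)` because
the difference operator lowers degrees by exactly one, so `deg B ≤ r + 2s`. Modulo
`x_p + ε x_q - z` we may put `z = a + b` with `a = x_p`, `b = ε x_q`, and `ε F(x_q, z) = F(b, z)`
since `B` is odd: `B + B(-x)` is `1`-periodic because the right-hand side of the difference
equation is invariant under `x ↦ -1 - x`. Homogenizing the difference equation at
`(x, z) = (-b, a + b)` gives `F(a, a + b) + F(b, a + b) = (a + b) G(-b, a + b) (ab) ^ s`, and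
homogenizing the equation of `Q` at the same point gives `(a - b) G(-b, a + b) = a ^ r - b ^ r`,
which is `a - b` times the geometric sum.
-/

open Polynomial

lemma MvPolynomial.aeval_sub_aeval_mem {σ R A : Type*} [CommSemiring R] [CommRing A] [Algebra R A]
    {I : Ideal A} {g g' : σ → A} (h : ∀ i, g i - g' i ∈ I) (F : MvPolynomial σ R) :
    aeval g F - aeval g' F ∈ I := by
  rw [← Ideal.Quotient.eq, ← Ideal.Quotient.mkₐ_eq_mk R, comp_aeval_apply, comp_aeval_apply]
  congr 2 with i
  exact Ideal.Quotient.eq.2 (h i)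

namespace Polynomial

section CommSemiring

variable {R A : Type*} [CommSemiring R] [CommSemiring A] [Algebra R A]

lemma aeval_homogenize (p : R[X]) (n : ℕ) (g : Fin 2 → A) :
    MvPolynomial.aeval g (homogenize p n) =
      ∑ i ∈ Finset.range (n + 1), algebraMap R A (p.coeff i) * g 0 ^ i * g 1 ^ (n - i) := by
  simp only [homogenize, Finset.Nat.sum_antidiagonal_eq_sum_range_succ_mk, map_sum,
    MvPolynomial.aeval_monomial]
  refine Finset.sum_congr rfl fun k _ ↦ ?_
  rw [Finsupp.update_eq_add_single (by simp), Finsupp.prod_add_index' (by simp) (by simp [pow_add]),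
    Finsupp.prod_single_index (by simp), Finsupp.prod_single_index (by simp), mul_assoc]

lemma homogenize_comp {p q : R[X]} {n : ℕ} (hp : p.natDegree ≤ n) (hq : q.natDegree ≤ 1) :
    homogenize (p.comp q) n = MvPolynomial.aeval ![homogenize q 1, .X 1] (homogenize p n) := by
  refine homogenize_eq_of_isHomogeneous ?_ ?_
  · have hlin : ∀ i, (![homogenize q 1, .X 1] i).IsHomogeneous 1 :=
      Fin.forall_fin_two.2 ⟨isHomogeneous_homogenize q, MvPolynomial.isHomogeneous_X R 1⟩
    simpa using (isHomogeneous_homogenize (n := n) p).aeval (S := R) _ hlin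
  · rw [MvPolynomial.comp_aeval_apply, comp_eq_aeval]
    convert aeval_homogenize_of_eq_one hp ![q, 1] rfl using 2
    · ext i; fin_cases i <;> simp [hq]
    · rfl

lemma aeval_homogenize_comp {p q : R[X]} {n : ℕ} (hp : p.natDegree ≤ n) (hq : q.natDegree ≤ 1)
    (g : Fin 2 → A) :
    MvPolynomial.aeval g (homogenize (p.comp q) n) =
      MvPolynomial.aeval ![MvPolynomial.aeval g (homogenize q 1), g 1] (homogenize p n) := by
  rw [homogenize_comp hp hq, MvPolynomial.comp_aeval_apply]
  congr 1
  ext i; fin_cases i <;> simp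

end CommSemiring

variable {R : Type*} [CommRing R] {r s : ℕ} {Q B : R[X]}

lemma coeff_comp_X_add_one_sub_self (p : R[X]) {m : ℕ} (hm : p.natDegree = m + 1) :
    (p.comp (X + 1) - p).coeff m = (m + 1) * p.coeff (m + 1) := by
  have hdeg : (hasseDeriv m p).natDegree < 2 := by
    have := natDegree_hasseDeriv_le p m; omega
  rw [coeff_sub, ← C_1, ← taylor_apply, taylor_coeff, eval_eq_sum_range' hdeg]
  simp [Finset.sum_range_succ, hasseDeriv_coeff, add_comm 1 m]

section CharZero

variable [IsDomain R] [CharZero R]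

lemma natDegree_le_of_natDegree_comp_X_add_one_sub_le {p : R[X]} {n : ℕ}
    (h : (p.comp (X + 1) - p).natDegree ≤ n) : p.natDegree ≤ n + 1 := by
  by_contra! hlt
  obtain ⟨m, hm⟩ : ∃ m, p.natDegree = m + 1 := ⟨p.natDegree - 1, by omega⟩
  have hlead : p.coeff (m + 1) ≠ 0 := by
    rw [← hm]; exact leadingCoeff_ne_zero.2 (ne_zero_of_natDegree_gt hlt)
  have hcoeff : (p.comp (X + 1) - p).coeff m ≠ 0 := by
    rw [coeff_comp_X_add_one_sub_self p hm]
    exact mul_ne_zero (by exact_mod_cast m.succ_ne_zero) hlead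
  have := le_natDegree_of_ne_zero hcoeff
  omega

lemma eq_zero_of_comp_X_add_one_eq_self {p : R[X]} (hp : p.comp (X + 1) = p) (h0 : p.eval 0 = 0) :
    p = 0 := by
  have hroot : ∀ n : ℕ, p.IsRoot n := by
    intro n
    induction n with
    | zero => simpa using h0
    | succ k ih =>
      have hk : p.eval ((k : R) + 1) = p.eval (k : R) := by
        simpa [eval_comp] using congrArg (eval (k : R)) hp
      simpa [IsRoot, hk] using ih
  exact eq_zero_of_infinite_isRoot p (Set.infinite_of_injective_forall_mem Nat.cast_injective hroot)

lemma comp_neg_X_eq_neg_of_comp_X_add_one_sub_eq {p g : R[X]} (hp : p.comp (X + 1) - p = g)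
    (hg : g.comp (-X - 1) = g) (h0 : p.eval 0 = 0) : p.comp (-X) = -p := by
  have hreflect : p.comp (-X) - p.comp (-X - 1) = g := by
    have h := congrArg (·.comp (-X - 1)) hp
    simpa only [sub_comp, comp_assoc, add_comp, X_comp, one_comp, hg, sub_add_cancel] using h
  have hperiodic : (p + p.comp (-X)).comp (X + 1) = p + p.comp (-X) := by
    rw [add_comp, comp_assoc, neg_comp, X_comp, neg_add]
    linear_combination hp - hreflect
  linear_combination eq_zero_of_comp_X_add_one_eq_self hperiodic (by simp [eval_comp, h0])

lemma natDegree_le_of_two_mul_X_add_one_mul_eq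
    (hQ : (2 * X + 1) * Q = (X + 1) ^ r - (-X) ^ r) : Q.natDegree ≤ r - 1 := by
  rcases eq_or_ne Q 0 with rfl | hQ0
  · simp
  have hlin : (2 * X + 1 : R[X]).natDegree = 1 := by compute_degree!
  have hrhs : ((X + 1) ^ r - (-X) ^ r : R[X]).natDegree ≤ r := by compute_degree
  rw [← hQ, natDegree_mul (by rintro h; simp [h] at hlin) hQ0, hlin] at hrhs
  omega

lemma comp_neg_X_sub_one_eq_self_of_two_mul_X_add_one_mul_eq
    (hQ : (2 * X + 1) * Q = (X + 1) ^ r - (-X) ^ r) : Q.comp (-X - 1) = Q := by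
  have hlin : (2 * X + 1 : R[X]) ≠ 0 := fun h ↦ by simpa using congrArg (eval 0) h
  have hreflect := congrArg (·.comp (-X - 1)) hQ
  simp only [mul_comp, sub_comp, pow_comp, add_comp, X_comp, one_comp, neg_comp, sub_add_cancel,
    ofNat_comp, Nat.cast_ofNat] at hreflect
  refine mul_left_cancel₀ hlin ?_
  linear_combination -hreflect - hQ

lemma natDegree_le_of_comp_X_add_one_sub_eq (hr : 0 < r)
    (hQdeg : Q.natDegree ≤ r - 1) (hB : B.comp (X + 1) - B = Q * (X + 1) ^ s * (-X) ^ s) :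
    B.natDegree ≤ r + 2 * s := by
  have hkernel : (Q * (X + 1) ^ s * (-X) ^ s).natDegree ≤ r - 1 + s * 1 + s * 1 :=
    natDegree_mul_le_of_le (natDegree_mul_le_of_le hQdeg
      (natDegree_pow_le_of_le s (by compute_degree))) (natDegree_pow_le_of_le s (by compute_degree))
  have := natDegree_le_of_natDegree_comp_X_add_one_sub_le (hB ▸ hkernel)
  omega

lemma comp_neg_X_eq_neg_of_comp_X_add_one_sub_eq_mul
    (hQ : (2 * X + 1) * Q = (X + 1) ^ r - (-X) ^ r)
    (hB : B.comp (X + 1) - B = Q * (X + 1) ^ s * (-X) ^ s) (hB0 : B.eval 0 = 0) :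
    B.comp (-X) = -B := by
  refine comp_neg_X_eq_neg_of_comp_X_add_one_sub_eq hB ?_ hB0
  simp only [mul_comp, pow_comp, comp_neg_X_sub_one_eq_self_of_two_mul_X_add_one_mul_eq hQ,
    add_comp, neg_comp, X_comp, one_comp, sub_add_cancel]
  ring

end CharZero

variable {A : Type*} [CommRing A] [Algebra R A]

lemma aeval_homogenize_neg_left {p : R[X]} {n : ℕ} (hp : p.natDegree ≤ n)
    (hodd : p.comp (-X) = -p) (y w : A) :
    MvPolynomial.aeval ![-y, w] (homogenize p n) =
      -MvPolynomial.aeval ![y, w] (homogenize p n) := by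
  have h := aeval_homogenize_comp hp (show (-X : R[X]).natDegree ≤ 1 by compute_degree) ![y, w]
  simpa [hodd] using h.symm

lemma aeval_homogenize_zero_left {p : R[X]} (h0 : p.eval 0 = 0) (n : ℕ) (w : A) :
    MvPolynomial.aeval ![0, w] (homogenize p n) = 0 := by
  rw [aeval_homogenize, Finset.sum_range_succ']
  simp [coeff_zero_eq_eval_zero, h0]

lemma aeval_homogenize_algebraMap_mul_left {p : R[X]} {n : ℕ} (hp : p.natDegree ≤ n)
    (hodd : p.comp (-X) = -p) (h0 : p.eval 0 = 0) {ε : R} (hε : ε = -1 ∨ ε = 0 ∨ ε = 1)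
    (y w : A) :
    MvPolynomial.aeval ![algebraMap R A ε * y, w] (homogenize p n) =
      algebraMap R A ε * MvPolynomial.aeval ![y, w] (homogenize p n) := by
  rcases hε with rfl | rfl | rfl
  · simpa using aeval_homogenize_neg_left hp hodd y w
  · simpa using aeval_homogenize_zero_left h0 n w
  · simp

lemma two_mul_add_mul_aeval_homogenize (hr : 0 < r) (hQdeg : Q.natDegree ≤ r - 1)
    (hQ : (2 * X + 1) * Q = (X + 1) ^ r - (-X) ^ r) (u w : A) :
    (2 * u + w) * MvPolynomial.aeval ![u, w] (homogenize Q (r - 1)) = (u + w) ^ r - (-u) ^ r := by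
  have hX0 := MvPolynomial.isHomogeneous_X R (0 : Fin 2)
  have hX1 := MvPolynomial.isHomogeneous_X R (1 : Fin 2)
  have hform : (.C 2 * .X 0 + .X 1) * homogenize Q (r - 1) = (.X 0 + .X 1) ^ r - (-.X 0) ^ r := by
    refine (homogenize_eq_of_isHomogeneous (p := (2 * X + 1) * Q) (n := r) ?_ ?_).symm.trans
      (homogenize_eq_of_isHomogeneous ?_ ?_)
    · convert ((hX0.C_mul 2).add hX1).mul (isHomogeneous_homogenize Q) using 1
      omega
    · simp [hQdeg, map_ofNat]
    · simpa using ((hX0.add hX1).pow r).sub (hX0.neg.pow r)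
    · simp [hQ]
  simpa [map_ofNat] using congrArg (MvPolynomial.aeval ![u, w]) hform

lemma aeval_homogenize_add_sub (hr : 0 < r) (hQdeg : Q.natDegree ≤ r - 1)
    (hB : B.comp (X + 1) - B = Q * (X + 1) ^ s * (-X) ^ s) (hBdeg : B.natDegree ≤ r + 2 * s)
    (u w : A) :
    MvPolynomial.aeval ![u + w, w] (homogenize B (r + 2 * s)) -
        MvPolynomial.aeval ![u, w] (homogenize B (r + 2 * s)) =
      w * MvPolynomial.aeval ![u, w] (homogenize Q (r - 1)) * ((u + w) * -u) ^ s := by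
  have hkernel : homogenize (Q * (X + 1) ^ s * (-X) ^ s) (r + 2 * s) =
      .X 1 * homogenize Q (r - 1) * ((.X 0 + .X 1) * -.X 0) ^ s := by
    refine homogenize_eq_of_isHomogeneous ?_ (by simp [hQdeg]; rw [← mul_neg, mul_pow]; ring)
    have hquad : ((.X 0 + .X 1) * -.X 0 : MvPolynomial (Fin 2) R).IsHomogeneous 2 :=
      ((MvPolynomial.isHomogeneous_X R 0).add (MvPolynomial.isHomogeneous_X R 1)).mul
        (MvPolynomial.isHomogeneous_X R 0).neg
    convert ((MvPolynomial.isHomogeneous_X R 1).mul (isHomogeneous_homogenize Q)).mul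
      (hquad.pow s) using 1
    omega
  have h := congrArg (fun p ↦ MvPolynomial.aeval ![u, w] (homogenize p (r + 2 * s))) hB
  simp only [homogenize_sub, map_sub, hkernel, aeval_homogenize_comp hBdeg
    (show (X + 1 : R[X]).natDegree ≤ 1 by compute_degree)] at h
  simpa [mul_comm w] using h

lemma aeval_homogenize_add_aeval_homogenize [IsDomain A] (hr : 0 < r)
    (hQdeg : Q.natDegree ≤ r - 1) (hQ : (2 * X + 1) * Q = (X + 1) ^ r - (-X) ^ r)
    (hB : B.comp (X + 1) - B = Q * (X + 1) ^ s * (-X) ^ s) (hBdeg : B.natDegree ≤ r + 2 * s)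
    (hodd : B.comp (-X) = -B) {a b : A} (hab : a ≠ b) :
    MvPolynomial.aeval ![a, a + b] (homogenize B (r + 2 * s)) +
        MvPolynomial.aeval ![b, a + b] (homogenize B (r + 2 * s)) =
      (a + b) * (∑ i ∈ Finset.range r, a ^ (r - 1 - i) * b ^ i) * (a * b) ^ s := by
  have hshift : -b + (a + b) = a := by ring
  have hdiff := aeval_homogenize_add_sub hr hQdeg hB hBdeg (-b) (a + b)
  have hq := two_mul_add_mul_aeval_homogenize hr hQdeg hQ (-b) (a + b)
  rw [hshift, aeval_homogenize_neg_left hBdeg hodd] at hdiff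
  rw [hshift] at hq
  have hgeom : (∑ i ∈ Finset.range r, a ^ (r - 1 - i) * b ^ i) * (a - b) = a ^ r - b ^ r := by
    rw [← geom_sum₂_mul, geom_sum₂_comm]
    simp only [mul_comm]
  refine mul_left_cancel₀ (sub_ne_zero.2 hab) ?_
  linear_combination (a - b) * hdiff + (a + b) * (a * b) ^ s * hq - (a + b) * (a * b) ^ s * hgeom

end Polynomial

/-- With B̄^B_{r,s}(x,z) the homogenization of the type-B Bernoulli-like polynomial,
for ε ∈ {-1,0,1}:
B̄^B(x_p,z) + ε B̄^B(x_q,z) ≡ (x_p + ε x_q)·(Σ_{i<r} x_p^{r-1-i}(ε x_q)^i)·(x_p·ε x_q)^s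
modulo the ideal (x_p + ε x_q - z).  Variables: X 0 = x_p, X 1 = x_q, X 2 = z. -/
theorem stmt10 (r s : ℕ) (hr : 0 < r) (Q B : ℝ[X])
    (hQ : (2 * X + 1) * Q = (X + 1) ^ r - (-X) ^ r)
    (hB : B.comp (X + 1) - B = Q * (X + 1) ^ s * (-X) ^ s)
    (hB0 : B.eval 0 = 0)
    (ε : ℝ) (hε : ε = -1 ∨ ε = 0 ∨ ε = 1) :
    ((∑ i ∈ Finset.range (r + 2 * s + 1),
        MvPolynomial.C (B.coeff i) * MvPolynomial.X 0 ^ i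
          * MvPolynomial.X 2 ^ (r + 2 * s - i))
      + MvPolynomial.C ε * (∑ i ∈ Finset.range (r + 2 * s + 1),
        MvPolynomial.C (B.coeff i) * MvPolynomial.X 1 ^ i
          * MvPolynomial.X 2 ^ (r + 2 * s - i)))
      - (MvPolynomial.X 0 + MvPolynomial.C ε * MvPolynomial.X 1)
          * (∑ i ∈ Finset.range r,
              MvPolynomial.X 0 ^ (r - 1 - i) * (MvPolynomial.C ε * MvPolynomial.X 1) ^ i)
          * (MvPolynomial.X 0 * (MvPolynomial.C ε * MvPolynomial.X 1)) ^ s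
      ∈ Ideal.span {(MvPolynomial.X 0 + MvPolynomial.C ε * MvPolynomial.X 1
          - MvPolynomial.X 2 : MvPolynomial (Fin 3) ℝ)} := by
  have hQdeg : Q.natDegree ≤ r - 1 := natDegree_le_of_two_mul_X_add_one_mul_eq hQ
  have hBdeg : B.natDegree ≤ r + 2 * s := natDegree_le_of_comp_X_add_one_sub_eq hr hQdeg hB
  have hodd : B.comp (-X) = -B := comp_neg_X_eq_neg_of_comp_X_add_one_sub_eq_mul hQ hB hB0
  have hsum (x z : MvPolynomial (Fin 3) ℝ) :
      ∑ i ∈ Finset.range (r + 2 * s + 1),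
          MvPolynomial.C (B.coeff i) * x ^ i * z ^ (r + 2 * s - i) =
        MvPolynomial.aeval ![x, z] (homogenize B (r + 2 * s)) := by
    rw [aeval_homogenize]
    simp [MvPolynomial.algebraMap_eq]
  simp only [hsum]
  have hne :
      (MvPolynomial.X 0 : MvPolynomial (Fin 3) ℝ) ≠ MvPolynomial.C ε * MvPolynomial.X 1 := by
    intro h
    simpa using congrArg (MvPolynomial.eval ![1, 0, 0]) h
  have hidentity := aeval_homogenize_add_aeval_homogenize hr hQdeg hQ hB hBdeg hodd hne
  have hscale := aeval_homogenize_algebraMap_mul_left (A := MvPolynomial (Fin 3) ℝ) hBdeg hodd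
    hB0 hε (MvPolynomial.X 1) (MvPolynomial.X 0 + MvPolynomial.C ε * MvPolynomial.X 1)
  rw [MvPolynomial.algebraMap_eq] at hscale
  have hsubst (x : MvPolynomial (Fin 3) ℝ) :
      MvPolynomial.aeval ![x, MvPolynomial.X 2] (homogenize B (r + 2 * s)) -
          MvPolynomial.aeval ![x, MvPolynomial.X 0 + MvPolynomial.C ε * MvPolynomial.X 1]
            (homogenize B (r + 2 * s)) ∈
        Ideal.span {MvPolynomial.X 0 + MvPolynomial.C ε * MvPolynomial.X 1 - MvPolynomial.X 2} :=
    MvPolynomial.aeval_sub_aeval_mem (Fin.forall_fin_two.2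
      ⟨by simp, Ideal.mem_span_singleton.2 ⟨-1, by simp⟩⟩) _
  convert add_mem (hsubst (MvPolynomial.X 0))
    (Ideal.mul_mem_left _ (MvPolynomial.C ε) (hsubst (MvPolynomial.X 1))) using 1
  linear_combination hidentity - hscale
end

section
/- The restriction of the homogenized type-B Bernoulli-like polynomial to z=0 satisfies: B̄^B_{r,s}(x, 0) = (-1)^s x^{r+2s}/(r+2s) if r is odd, and B̄^B_{r,s}(x,0) = 0 if r is even. -/
open Polynomial Finset


lemma comp_coeff (B : ℝ[X]) (k : ℕ) :
    (B.comp (X + 1)).coeff k =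
      ∑ j ∈ range (B.natDegree + 1), B.coeff j * (j.choose k) := by
  conv_lhs => rw [B.as_sum_range]
  simp [Polynomial.sum_comp, monomial_comp, finset_sum_coeff, coeff_X_add_one_pow]

lemma delta_coeff_high (B : ℝ[X]) (k : ℕ) (hk : B.natDegree ≤ k) :
    (B.comp (X + 1) - B).coeff k = 0 := by
  rw [coeff_sub, comp_coeff]
  rcases eq_or_lt_of_le hk with h | h
  · rw [Finset.sum_eq_single k]
    · simp
    · intro j hj hne
      simp only [Finset.mem_range] at hj
      have : j < k := by omega
      simp [Nat.choose_eq_zero_of_lt this]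
    · intro h'
      simp only [Finset.mem_range] at h'
      omega
  · rw [Finset.sum_eq_zero, coeff_eq_zero_of_natDegree_lt h]
    · ring
    · intro j hj
      simp only [Finset.mem_range] at hj
      have : j < k := by omega
      simp [Nat.choose_eq_zero_of_lt this]

lemma delta_coeff_top (B : ℝ[X]) (t : ℕ) (ht : B.natDegree = t + 1) :
    (B.comp (X + 1) - B).coeff t = (t + 1 : ℝ) * B.coeff (t + 1) := by
  rw [coeff_sub, comp_coeff, ht, Finset.sum_range_succ, Finset.sum_range_succ,
    Finset.sum_eq_zero]
  · simp [Nat.choose_succ_self_right]; ring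
  · intro j hj
    simp only [Finset.mem_range] at hj
    simp [Nat.choose_eq_zero_of_lt hj]


/-- Restriction of the homogenized type-B Bernoulli-like polynomial to z = 0:
B̄^B_{r,s}(x,0) = (-1)^s x^{r+2s}/(r+2s) if r is odd, and 0 if r is even.
Here B̄^B_{r,s}(x,0) = Σᵢ (coeff i of B)·xⁱ·0^{r+2s-i} in ℝ[x]. -/
theorem stmt12 (r s : ℕ) (hr : 0 < r) (Q B : ℝ[X])
    (hQ : (2 * X + 1) * Q = (X + 1) ^ r - (-X) ^ r)
    (hB : B.comp (X + 1) - B = Q * (X + 1) ^ s * (-X) ^ s)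
    (hB0 : B.eval 0 = 0) :
    (Odd r →
      (∑ i ∈ Finset.range (r + 2 * s + 1),
          C (B.coeff i) * X ^ i * (0 : ℝ[X]) ^ (r + 2 * s - i))
        = C ((-1 : ℝ) ^ s / ((r : ℝ) + 2 * s)) * X ^ (r + 2 * s))
    ∧ (Even r →
      (∑ i ∈ Finset.range (r + 2 * s + 1),
          C (B.coeff i) * X ^ i * (0 : ℝ[X]) ^ (r + 2 * s - i)) = 0) := by
  set n := r + 2 * s with hn
  have hn1 : 1 ≤ n := by omega
  have hsum : (∑ i ∈ Finset.range (n + 1),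
      C (B.coeff i) * X ^ i * (0 : ℝ[X]) ^ (n - i)) = C (B.coeff n) * X ^ n := by
    rw [Finset.sum_eq_single n]
    · simp
    · intro i hi hne
      simp only [Finset.mem_range] at hi
      have : n - i ≠ 0 := by omega
      simp [zero_pow this]
    · intro h
      simp only [Finset.mem_range] at h
      omega
  rw [hsum]
  constructor
  · -- odd case
    intro hodd
    have hneg : ((-X : ℝ[X])) ^ r = -(X ^ r) := hodd.neg_pow X
    rw [hneg, sub_neg_eq_add] at hQ
    -- facts about P := (X+1)^r + X^r
    have hPc : ((X + 1 : ℝ[X]) ^ r + X ^ r).coeff r = 2 := by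
      simp [coeff_X_add_one_pow, coeff_X_pow]
      norm_num
    have hPd : ((X + 1 : ℝ[X]) ^ r + X ^ r).natDegree = r := by
      compute_degree!
    have hQne : Q ≠ 0 := by
      intro h
      rw [h, mul_zero] at hQ
      have := hPc
      rw [← hQ] at this
      simp at this
    have h2d : ((2 : ℝ[X]) * X + 1).natDegree = 1 := by compute_degree!
    have h2ne : ((2 : ℝ[X]) * X + 1) ≠ 0 := by
      intro h
      have := congrArg natDegree h
      rw [h2d] at this
      simp at this
    have hQd : Q.natDegree = r - 1 := by
      have := natDegree_mul h2ne hQne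
      rw [hQ, hPd, h2d] at this
      omega
    have h2lc : ((2 : ℝ[X]) * X + 1).leadingCoeff = 2 := by
      rw [leadingCoeff, h2d]
      simp [coeff_one]
    have hPlc : ((X + 1 : ℝ[X]) ^ r + X ^ r).leadingCoeff = 2 := by
      rw [leadingCoeff, hPd, hPc]
    have hQlc : Q.leadingCoeff = 1 := by
      have := leadingCoeff_mul ((2 : ℝ[X]) * X + 1) Q
      rw [hQ, hPlc, h2lc] at this
      linarith
    -- RHS facts
    have hx1ne : ((X + 1 : ℝ[X]) ^ s) ≠ 0 := pow_ne_zero _ (by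
      intro h
      have := congrArg (eval 0) h
      simp at this)
    have hxne : ((-X : ℝ[X]) ^ s) ≠ 0 := pow_ne_zero _ (by
      intro h
      have := congrArg (coeff · 1) h
      simp at this)
    have hRd : (Q * (X + 1) ^ s * (-X : ℝ[X]) ^ s).natDegree = n - 1 := by
      rw [natDegree_mul (mul_ne_zero hQne hx1ne) hxne, natDegree_mul hQne hx1ne,
        hQd, natDegree_pow, natDegree_pow]
      have : (X + 1 : ℝ[X]).natDegree = 1 := by compute_degree!
      rw [this]
      have : (-X : ℝ[X]).natDegree = 1 := by simp
      rw [this]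
      omega
    have hRlc : (Q * (X + 1) ^ s * (-X : ℝ[X]) ^ s).leadingCoeff = (-1 : ℝ) ^ s := by
      rw [leadingCoeff_mul, leadingCoeff_mul, hQlc, leadingCoeff_pow, leadingCoeff_pow]
      have h1 : (X + 1 : ℝ[X]).leadingCoeff = 1 := by
        simpa using (monic_X_add_C (1 : ℝ)).leadingCoeff
      have h2 : (-X : ℝ[X]).leadingCoeff = -1 := by simp
      rw [h1, h2]
      ring
    have hc : (B.comp (X + 1) - B).coeff (n - 1) = (-1 : ℝ) ^ s := by
      rw [hB, ← hRd, ← leadingCoeff, hRlc]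
    have hcne : (B.comp (X + 1) - B).coeff (n - 1) ≠ 0 := by
      rw [hc]
      positivity
    -- natDegree B ≥ n
    have hmge : n ≤ B.natDegree := by
      by_contra h
      exact hcne (delta_coeff_high B (n - 1) (by omega))
    -- natDegree B ≤ n
    have hBne : B ≠ 0 := by
      intro h
      rw [h] at hmge
      simp at hmge
      omega
    obtain ⟨t, ht⟩ : ∃ t, B.natDegree = t + 1 := ⟨B.natDegree - 1, by omega⟩
    have htop := delta_coeff_top B t ht
    have hlcne : B.coeff (t + 1) ≠ 0 := by
      rw [← ht]
      exact leadingCoeff_ne_zero.mpr hBne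
    have htne : (B.comp (X + 1) - B).coeff t ≠ 0 := by
      rw [htop]
      exact mul_ne_zero (by positivity) hlcne
    have hle : t ≤ n - 1 := by
      by_contra h
      apply htne
      rw [hB]
      exact coeff_eq_zero_of_natDegree_lt (by omega)
    have hmeq : B.natDegree = n := by omega
    have ht' : t = n - 1 := by omega
    rw [ht'] at htop
    have hkey : ((n - 1 : ℕ) + 1 : ℝ) * B.coeff ((n - 1) + 1) = (-1 : ℝ) ^ s := by
      rw [← htop, hB, ← hRd, ← leadingCoeff, hRlc]
    have hn' : (n - 1 : ℕ) + 1 = n := by omega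
    rw [hn'] at hkey
    have hcoeff : B.coeff n = (-1 : ℝ) ^ s / ((r : ℝ) + 2 * s) := by
      have hne : ((r : ℝ) + 2 * s) ≠ 0 := by positivity
      have hcast : ((n - 1 : ℕ) : ℝ) + 1 = (r : ℝ) + 2 * s := by
        have : ((n - 1 : ℕ) : ℝ) = (n : ℝ) - 1 := by
          push_cast [Nat.cast_sub hn1]; ring
        rw [this, hn]
        push_cast
        ring
      rw [hcast] at hkey
      field_simp
      linarith
    rw [hcoeff]
  · -- even case
    intro heven
    have hneg : ((-X : ℝ[X])) ^ r = X ^ r := heven.neg_pow X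
    rw [hneg] at hQ
    have hr2 : 2 ≤ r := by
      rcases heven with ⟨k, hk⟩
      omega
    have hPd : ((X + 1 : ℝ[X]) ^ r - X ^ r).natDegree ≤ r - 1 := by
      rw [natDegree_le_iff_coeff_eq_zero]
      intro m hm
      rw [coeff_sub, coeff_X_add_one_pow, coeff_X_pow]
      rcases eq_or_lt_of_le (by omega : r ≤ m) with h | h
      · simp [← h]
      · simp [Nat.choose_eq_zero_of_lt h, (Nat.ne_of_lt h).symm]
    have hQd : Q.natDegree ≤ r - 2 := by
      by_cases hQne : Q = 0
      · rw [hQne]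
        simp
      · have h2d : ((2 : ℝ[X]) * X + 1).natDegree = 1 := by compute_degree!
        have h2ne : ((2 : ℝ[X]) * X + 1) ≠ 0 := by
          intro h
          have := congrArg natDegree h
          rw [h2d] at this
          simp at this
        have := natDegree_mul h2ne hQne
        rw [hQ, h2d] at this
        omega
    have hRd : (Q * (X + 1) ^ s * (-X : ℝ[X]) ^ s).natDegree ≤ n - 2 := by
      refine le_trans (natDegree_mul_le) ?_
      have hd1 : (X + 1 : ℝ[X]).natDegree = 1 := by compute_degree!
      have hd2 : (-X : ℝ[X]).natDegree = 1 := by simp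
      have h1 : (Q * (X + 1) ^ s).natDegree ≤ (r - 2) + s := by
        refine le_trans (natDegree_mul_le) ?_
        have : ((X + 1 : ℝ[X]) ^ s).natDegree ≤ s := by
          simpa [hd1] using natDegree_pow_le (p := (X + 1 : ℝ[X])) (n := s)
        omega
      have h2 : ((-X : ℝ[X]) ^ s).natDegree ≤ s := by
        simpa [hd2] using natDegree_pow_le (p := (-X : ℝ[X])) (n := s)
      omega
    have hmle : B.natDegree ≤ n - 1 := by
      by_contra h
      push_neg at h
      have hBne : B ≠ 0 := by
        intro h0
        rw [h0] at h
        simp at h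
      obtain ⟨t, ht⟩ : ∃ t, B.natDegree = t + 1 := ⟨B.natDegree - 1, by omega⟩
      have htop := delta_coeff_top B t ht
      have hlcne : B.coeff (t + 1) ≠ 0 := by
        rw [← ht]
        exact leadingCoeff_ne_zero.mpr hBne
      have htne : (B.comp (X + 1) - B).coeff t ≠ 0 := by
        rw [htop]
        exact mul_ne_zero (by positivity) hlcne
      apply htne
      rw [hB]
      exact coeff_eq_zero_of_natDegree_lt (by omega)
    have : B.coeff n = 0 := coeff_eq_zero_of_natDegree_lt (by omega)
    rw [this]
    simp
end
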